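/- arXiv:2005.13081 — 2 statements merged into one kernel-verified Lean document; each statement's English description precedes it below -/
import Mathlib

section
/- Let m and n be positive integers. The two continuous homomorphisms U_m → U_{mn} given by A ↦ A ⊗ I_n and A ↦ I_n ⊗ A (Kronecker product with the identity on the right, respectively on the left) are homotopic as continuous maps U_m → U_{mn}. -/
open Matrix Kronecker unitInterval Topology

noncomputable section

/-- The unitary group `U_n` of `n × n` complex matrices, with the subspace topology,
based at the identity matrix. -/
abbrev U (n : ℕ) : Type := Matrix.unitaryGroup (Fin n) ℂ

namespace Paper

/-! ### Reindexing unitary matrices -/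

/-- Reindexing a unitary matrix along an equivalence of index types. -/
def uReindex {ι κ : Type} [Fintype ι] [DecidableEq ι] [Fintype κ] [DecidableEq κ]
    (e : ι ≃ κ) (A : Matrix.unitaryGroup ι ℂ) : Matrix.unitaryGroup κ ℂ :=
  ⟨Matrix.reindex e e A.1, by
    rw [Matrix.mem_unitaryGroup_iff]
    have h : star ((Matrix.reindex e e) A.1) = Matrix.reindex e e (star A.1) := by
      simp [Matrix.star_eq_conjTranspose, Matrix.reindex_apply, Matrix.conjTranspose_submatrix]
    rw [h, Matrix.reindex_apply, Matrix.reindex_apply, Matrix.submatrix_mul_equiv, A.2.2,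
      Matrix.submatrix_one_equiv]⟩

@[simp] theorem uReindex_val {ι κ : Type} [Fintype ι] [DecidableEq ι] [Fintype κ] [DecidableEq κ]
    (e : ι ≃ κ) (A : Matrix.unitaryGroup ι ℂ) :
    (uReindex e A).1 = Matrix.reindex e e A.1 := rfl

theorem continuous_uReindex {ι κ : Type} [Fintype ι] [DecidableEq ι] [Fintype κ] [DecidableEq κ]
    (e : ι ≃ κ) : Continuous (uReindex (e := e)) :=
  Continuous.subtype_mk ((continuous_subtype_val).matrix_reindex e e) _

@[simp] theorem uReindex_one {ι κ : Type} [Fintype ι] [DecidableEq ι] [Fintype κ] [DecidableEq κ]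
    (e : ι ≃ κ) : uReindex e (1 : Matrix.unitaryGroup ι ℂ) = 1 :=
  Subtype.ext (by simp [uReindex, Matrix.reindex_apply, Matrix.submatrix_one_equiv])

/-- Transport along an equality of sizes. -/
def uCast {m k : ℕ} (h : m = k) (A : U m) : U k := uReindex (finCongr h) A

theorem continuous_uCast {m k : ℕ} (h : m = k) : Continuous (uCast h) :=
  continuous_uReindex _

@[simp] theorem uCast_one {m k : ℕ} (h : m = k) : uCast h (1 : U m) = 1 := uReindex_one _

/-! ### Block sums and Kronecker products of unitary matrices -/

/-- The block sum `diag(A, B)` of unitary matrices, as an element of `U (m + n)`. -/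
def bdiag2 {m n : ℕ} (A : U m) (B : U n) : U (m + n) :=
  ⟨Matrix.reindex finSumFinEquiv finSumFinEquiv (Matrix.fromBlocks A.1 0 0 B.1), by
    rw [Matrix.mem_unitaryGroup_iff]
    have h : star ((Matrix.reindex finSumFinEquiv finSumFinEquiv)
        (Matrix.fromBlocks A.1 0 0 B.1)) = Matrix.reindex finSumFinEquiv finSumFinEquiv
        (star (Matrix.fromBlocks A.1 0 0 B.1)) := by
      simp [Matrix.star_eq_conjTranspose, Matrix.reindex_apply, Matrix.conjTranspose_submatrix]
    have hA : A.1 * A.1ᴴ = 1 := A.2.2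
    have hB : B.1 * B.1ᴴ = 1 := B.2.2
    have h2 : Matrix.fromBlocks A.1 0 0 B.1 * star (Matrix.fromBlocks A.1 0 0 B.1) = 1 := by
      simp [Matrix.star_eq_conjTranspose, Matrix.fromBlocks_conjTranspose,
        Matrix.fromBlocks_multiply, hA, hB, Matrix.fromBlocks_one]
    rw [h, Matrix.reindex_apply, Matrix.reindex_apply, Matrix.submatrix_mul_equiv, h2,
      Matrix.submatrix_one_equiv]⟩

@[simp] theorem bdiag2_one {m n : ℕ} : bdiag2 (1 : U m) (1 : U n) = 1 :=
  Subtype.ext (by simp [bdiag2, Matrix.fromBlocks_one, Matrix.reindex_apply,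
    Matrix.submatrix_one_equiv])

theorem continuous_bdiag2 {m n : ℕ} :
    Continuous (fun p : U m × U n => bdiag2 p.1 p.2) := by
  apply Continuous.subtype_mk
  exact ((Continuous.matrix_fromBlocks (continuous_subtype_val.comp continuous_fst)
    continuous_const continuous_const
    (continuous_subtype_val.comp continuous_snd)).matrix_reindex _ _)

/-- The equivalence used to index an array of `r` blocks of size `n` by `Fin (r * n)`. -/
def bde (r n : ℕ) : (Fin n × Fin r) ≃ Fin (r * n) :=
  (Equiv.prodComm (Fin n) (Fin r)).trans finProdFinEquiv

/-- The block-diagonal sum `diag(A 1, …, A r)` of a family of unitary matrices. -/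
def blockDiagU {r n : ℕ} (A : Fin r → U n) : U (r * n) :=
  ⟨Matrix.reindex (bde r n) (bde r n) (Matrix.blockDiagonal fun j => (A j).1), by
    rw [Matrix.mem_unitaryGroup_iff]
    have h : star ((Matrix.reindex (bde r n) (bde r n))
        (Matrix.blockDiagonal fun j => (A j).1)) = Matrix.reindex (bde r n) (bde r n)
        (star (Matrix.blockDiagonal fun j => (A j).1)) := by
      simp [Matrix.star_eq_conjTranspose, Matrix.reindex_apply, Matrix.conjTranspose_submatrix]
    have hA : ∀ j, (A j).1 * ((A j).1)ᴴ = 1 := fun j => (A j).2.2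
    have h2 : (Matrix.blockDiagonal fun j => (A j).1) *
        star (Matrix.blockDiagonal fun j => (A j).1) = 1 := by
      rw [Matrix.star_eq_conjTranspose, Matrix.blockDiagonal_conjTranspose,
        ← Matrix.blockDiagonal_mul]
      have h1 : (fun k : Fin r => (A k).1 * ((A k).1)ᴴ) = (1 : Fin r → Matrix (Fin n) (Fin n) ℂ) :=
        funext fun k => hA k
      rw [h1, Matrix.blockDiagonal_one]
    rw [h, Matrix.reindex_apply, Matrix.reindex_apply, Matrix.submatrix_mul_equiv, h2,
      Matrix.submatrix_one_equiv]⟩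

@[simp] theorem blockDiagU_one {r n : ℕ} : blockDiagU (fun _ : Fin r => (1 : U n)) = 1 := by
  apply Subtype.ext
  have h1 : (fun _ : Fin r => ((1 : U n) : Matrix (Fin n) (Fin n) ℂ)) =
      (1 : Fin r → Matrix (Fin n) (Fin n) ℂ) := rfl
  show Matrix.reindex (bde r n) (bde r n) (Matrix.blockDiagonal _) = _
  rw [h1, Matrix.blockDiagonal_one, Matrix.reindex_apply, Matrix.submatrix_one_equiv]
  rfl

theorem continuous_blockDiagU {X : Type} [TopologicalSpace X] {r n : ℕ} {A : X → Fin r → U n}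
    (hA : ∀ j, Continuous fun x => A x j) : Continuous fun x => blockDiagU (A x) := by
  apply Continuous.subtype_mk
  exact (Continuous.matrix_blockDiagonal
    (continuous_pi fun j => (continuous_subtype_val.comp (hA j)))).matrix_reindex _ _

/-- The Kronecker product of unitary matrices, as an element of `U (m * n)`. -/
def kronU {m n : ℕ} (A : U m) (B : U n) : U (m * n) :=
  ⟨Matrix.reindex finProdFinEquiv finProdFinEquiv (A.1 ⊗ₖ B.1), by
    rw [Matrix.mem_unitaryGroup_iff]
    have hstar : ∀ (C : Matrix (Fin m) (Fin m) ℂ) (D : Matrix (Fin n) (Fin n) ℂ),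
        star (C ⊗ₖ D) = star C ⊗ₖ star D := by
      intro C D
      ext ⟨i, j⟩ ⟨k, l⟩
      simp [Matrix.star_eq_conjTranspose, Matrix.conjTranspose_apply,
        Matrix.kroneckerMap_apply, mul_comm]
    have h : star ((Matrix.reindex finProdFinEquiv finProdFinEquiv) (A.1 ⊗ₖ B.1)) =
        Matrix.reindex finProdFinEquiv finProdFinEquiv (star (A.1 ⊗ₖ B.1)) := by
      simp [Matrix.star_eq_conjTranspose, Matrix.reindex_apply, Matrix.conjTranspose_submatrix]
    have h2 : (A.1 ⊗ₖ B.1) * star (A.1 ⊗ₖ B.1) = 1 := by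
      rw [hstar, ← Matrix.mul_kronecker_mul, A.2.2, B.2.2, Matrix.one_kronecker_one]
    rw [h, Matrix.reindex_apply, Matrix.reindex_apply, Matrix.submatrix_mul_equiv, h2,
      Matrix.submatrix_one_equiv]⟩

@[simp] theorem kronU_one {m n : ℕ} : kronU (1 : U m) (1 : U n) = 1 :=
  Subtype.ext (by simp [kronU, Matrix.one_kronecker_one, Matrix.reindex_apply,
    Matrix.submatrix_one_equiv])

theorem continuous_kronU {m n : ℕ} : Continuous fun p : U m × U n => kronU p.1 p.2 := by
  apply Continuous.subtype_mk
  apply Continuous.matrix_reindex _ finProdFinEquiv finProdFinEquiv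
  apply continuous_matrix
  rintro ⟨i, j⟩ ⟨k, l⟩
  simp only [Matrix.kroneckerMap_apply]
  exact ((continuous_subtype_val.comp continuous_fst).matrix_elem i k).mul
    ((continuous_subtype_val.comp continuous_snd).matrix_elem j l)

/-! ### The induced map on homotopy groups -/

/-- The map on generalized loops induced by a continuous basepoint-preserving map. -/
def loopMap {N : Type} {X Y : Type} [TopologicalSpace X] [TopologicalSpace Y]
    (f : C(X, Y)) {x : X} {y : Y} (hf : f x = y) (p : GenLoop N X x) : GenLoop N Y y :=
  ⟨f.comp p.1, fun t ht => by
    simp only [ContinuousMap.comp_apply]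
    rw [p.2 t ht, hf]⟩

/-- The homomorphism `π_k(f)` induced on homotopy groups (based at the given points) by a
continuous basepoint-preserving map `f`, as a function. -/
def πMap (k : ℕ) {X Y : Type} [TopologicalSpace X] [TopologicalSpace Y]
    (f : C(X, Y)) {x : X} {y : Y} (hf : f x = y) :
    HomotopyGroup (Fin k) X x → HomotopyGroup (Fin k) Y y :=
  Quotient.map (loopMap f hf)
    (fun _ _ h => h.elim fun H => ⟨H.compContinuousMap f⟩)

end Paper
/-! ### The standard stabilization and operation maps, as continuous maps -/

namespace Paper

/-- `est_{m,n} : U_m → U_{m+n}`, `A ↦ diag(A, I_n)`. -/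
def est (m n : ℕ) : C(U m, U (m + n)) :=
  ⟨fun A => bdiag2 A 1, continuous_bdiag2.comp (continuous_id.prodMk continuous_const)⟩

theorem est_one (m n : ℕ) : est m n 1 = 1 := bdiag2_one

/-- `U_n → U_{m+n}`, `B ↦ diag(I_m, B)`. -/
def est' (m n : ℕ) : C(U n, U (m + n)) :=
  ⟨fun B => bdiag2 1 B, continuous_bdiag2.comp (continuous_const.prodMk continuous_id)⟩

theorem est'_one (m n : ℕ) : est' m n 1 = 1 := bdiag2_one

/-- `s_j : U_n → U_{rn}` placing `A` in the `j`-th diagonal block (0-indexed) and identity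
blocks elsewhere. -/
def sMap (n r : ℕ) (j : Fin r) : C(U n, U (r * n)) :=
  ⟨fun A => blockDiagU (fun k => if k = j then A else 1), by
    apply continuous_blockDiagU
    intro k
    by_cases hk : k = j
    · simp only [hk, if_true]; exact continuous_id
    · simp only [hk, if_false]; exact continuous_const⟩

theorem sMap_one (n r : ℕ) (j : Fin r) : sMap n r j 1 = 1 := by
  show blockDiagU _ = 1
  have : (fun k : Fin r => if k = j then (1 : U n) else 1) = fun _ => (1 : U n) := by
    funext k; split <;> rfl
  rw [this, blockDiagU_one]

/-- The `r`-fold direct sum `⊕^r : U_n → U_{rn}`, `A ↦ diag(A, …, A)`. -/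
def rSum (n r : ℕ) : C(U n, U (r * n)) :=
  ⟨fun A => blockDiagU (fun _ : Fin r => A), continuous_blockDiagU fun _ => continuous_id⟩

theorem rSum_one (n r : ℕ) : rSum n r 1 = 1 := blockDiagU_one

/-- The direct sum `⊕ : U_m × U_n → U_{m+n}`, `(A, B) ↦ diag(A, B)`. -/
def dsum (m n : ℕ) : C(U m × U n, U (m + n)) :=
  ⟨fun p => bdiag2 p.1 p.2, continuous_bdiag2⟩

theorem dsum_one (m n : ℕ) : dsum m n 1 = 1 := bdiag2_one

/-- The tensor (Kronecker) product `⊗ : U_m × U_n → U_{mn}`. -/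
def tens (m n : ℕ) : C(U m × U n, U (m * n)) :=
  ⟨fun p => kronU p.1 p.2, continuous_kronU⟩

theorem tens_one (m n : ℕ) : tens m n 1 = 1 := kronU_one

/-- `A ↦ A ⊗ I_n : U_m → U_{mn}`. -/
def kronR (m n : ℕ) : C(U m, U (m * n)) :=
  ⟨fun A => kronU A 1, continuous_kronU.comp (continuous_id.prodMk continuous_const)⟩

/-- `A ↦ I_n ⊗ A : U_m → U_{mn}`. -/
def kronL (m n : ℕ) : C(U m, U (m * n)) :=
  ⟨fun A => uCast (Nat.mul_comm n m) (kronU 1 A),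
    (continuous_uCast _).comp (continuous_kronU.comp (continuous_const.prodMk continuous_id))⟩

/-- The stabilization `σ : U_k → U_N`, `A ↦ diag(A, I_{N-k})`, for `k ≤ N`. -/
def sigmaMap (k N : ℕ) (h : k ≤ N) : C(U k, U N) :=
  ⟨fun A => uCast (Nat.add_sub_cancel' h) (bdiag2 A 1),
    (continuous_uCast _).comp (continuous_bdiag2.comp (continuous_id.prodMk continuous_const))⟩

theorem sigmaMap_one (k N : ℕ) (h : k ≤ N) : sigmaMap k N h 1 = 1 := by
  show uCast _ (bdiag2 1 1) = 1
  rw [bdiag2_one, uCast_one]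

/-- The `r`-fold Kronecker power `A ↦ A ⊗ ⋯ ⊗ A : U_k → U_{k^r}`. -/
def kronPow {k : ℕ} : (r : ℕ) → U k → U (k ^ r)
  | 0 => fun _ => uCast (pow_zero k).symm 1
  | r + 1 => fun A => uCast (pow_succ k r).symm (kronU (kronPow r A) A)

theorem continuous_kronPow {k : ℕ} (r : ℕ) : Continuous fun A : U k => kronPow r A := by
  induction r with
  | zero => exact continuous_const
  | succ r ih =>
    show Continuous fun A : U k => uCast (pow_succ k r).symm (kronU (kronPow r A) A)
    exact (continuous_uCast _).comp (continuous_kronU.comp (ih.prodMk continuous_id))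

theorem kronPow_one {k : ℕ} (r : ℕ) : kronPow r (1 : U k) = 1 := by
  induction r with
  | zero => exact uCast_one _
  | succ r ih =>
    show uCast _ (kronU (kronPow r 1) 1) = 1
    rw [ih, kronU_one, uCast_one]

/-- The `r`-fold Kronecker power as a continuous map. -/
def kronPowC (n r : ℕ) : C(U n, U (n ^ r)) := ⟨kronPow r, continuous_kronPow r⟩

theorem kronPowC_one (n r : ℕ) : kronPowC n r 1 = 1 := kronPow_one r

end Paper

/-!
`A ⊗ I_n` and `I_n ⊗ A` differ by conjugation with the permutation matrix of the swap
`Fin m × Fin n ≃ Fin n × Fin m`. Every permutation matrix lies in the identity component of the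
unitary group: a transposition matrix `S` is a self-adjoint unitary, joined to `1` by
`t ↦ ((1 + e^{iπt}) / 2) • 1 + ((1 - e^{iπt}) / 2) • S`, and permutations are products of
transpositions. Conjugating by the points of a path from `1` to the permutation matrix is the
homotopy.
-/

section ConjugationHomotopy

variable {X G : Type*} [TopologicalSpace X] [TopologicalSpace G] [Group G] [IsTopologicalGroup G]

/-- Moving `g` to `1` along a path turns conjugation by `g` into the identity. -/
theorem ContinuousMap.homotopic_of_forall_eq_conj {f f' : C(X, G)} {g : G} (hg : Joined 1 g)
    (hf' : ∀ x, f' x = g * f x * g⁻¹) : f.Homotopic f' := by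
  obtain ⟨γ⟩ := hg
  exact ⟨{ toFun := fun p => γ p.1 * f p.2 * (γ p.1)⁻¹
           continuous_toFun := by fun_prop
           map_zero_left := fun x => by simp
           map_one_left := fun x => by simp [hf'] }⟩

end ConjugationHomotopy

section SelfAdjointUnitary

theorem smul_one_add_smul_mul_smul_one_add_smul {A : Type*} [Ring A] [Algebra ℂ A] {u : A}
    (hu : u * u = 1) (a b c d : ℂ) :
    (a • 1 + b • u) * (c • 1 + d • u) = (a * c + b * d) • (1 : A) + (a * d + b * c) • u := by
  simp only [add_mul, mul_add, smul_mul_smul, one_mul, mul_one, hu]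
  module

variable {A : Type*} [Ring A] [StarRing A] [Algebra ℂ A] [StarModule ℂ A]

/-- On the `±1`-eigenspaces of the involution `u` this acts by `1` and by `z`. -/
theorem smul_one_add_smul_mem_unitary {u : A} (hu : u ∈ unitary A) (hsa : IsSelfAdjoint u)
    (z : Circle) :
    ((1 + z) / 2 : ℂ) • (1 : A) + ((1 - z) / 2 : ℂ) • u ∈ unitary A := by
  have huu : u * u = 1 := by simpa [hsa.star_eq] using Unitary.star_mul_self_of_mem hu
  have hzz : star (z : ℂ) * z = 1 := by
    rw [Complex.star_def, Complex.conj_mul', Circle.norm_coe, Complex.ofReal_one, one_pow]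
  have hscalar : ∀ c d : ℂ, c = 1 → d = 0 → c • (1 : A) + d • u = 1 := by
    rintro c d rfl rfl
    simp
  rw [Unitary.mem_iff, star_add, star_smul, star_smul, star_one, hsa.star_eq,
    smul_one_add_smul_mul_smul_one_add_smul huu, smul_one_add_smul_mul_smul_one_add_smul huu]
  simp only [star_div₀, star_add, star_sub, star_one, star_ofNat]
  constructor <;> apply hscalar
  · linear_combination (1 / 2 : ℂ) * hzz
  · linear_combination (-1 / 2 : ℂ) * hzz
  · linear_combination (1 / 2 : ℂ) * hzz
  · linear_combination (-1 / 2 : ℂ) * hzz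

theorem Unitary.joined_one_of_isSelfAdjoint [TopologicalSpace A] [ContinuousAdd A]
    [ContinuousSMul ℂ A] {u : unitary A} (hu : IsSelfAdjoint (u : A)) : Joined 1 u :=
  ⟨{ toFun := fun t => ⟨_, smul_one_add_smul_mem_unitary u.2 hu (Circle.exp (Real.pi * t))⟩
     continuous_toFun := by fun_prop
     source' := by ext; simp
     target' := by ext; simp [Circle.coe_exp, Complex.exp_pi_mul_I] }⟩

end SelfAdjointUnitary

namespace Matrix

variable {ι R : Type*} [Fintype ι] [DecidableEq ι]

theorem permMatrix_mul_mul_inv_permMatrix [NonAssocSemiring R] (e : Equiv.Perm ι)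
    (M : Matrix ι ι R) : e.permMatrix R * M * e⁻¹.permMatrix R = M.submatrix e e := by
  rw [PEquiv.toMatrix_toPEquiv_mul, PEquiv.mul_toMatrix_toPEquiv, submatrix_submatrix]
  rfl

theorem permMatrix_mem_unitaryGroup [CommRing R] [StarRing R] (e : Equiv.Perm ι) :
    e.permMatrix R ∈ unitaryGroup ι R := by
  rw [mem_unitaryGroup_iff, star_eq_conjTranspose, conjTranspose_permMatrix, ← permMatrix_mul,
    inv_mul_cancel, permMatrix_one]

def permUnitary [CommRing R] [StarRing R] (e : Equiv.Perm ι) : unitaryGroup ι R :=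
  ⟨e.permMatrix R, permMatrix_mem_unitaryGroup e⟩

section PermUnitary

variable [CommRing R] [StarRing R]

@[simp] theorem coe_permUnitary (e : Equiv.Perm ι) :
    ((permUnitary e : unitaryGroup ι R) : Matrix ι ι R) = e.permMatrix R :=
  rfl

@[simp] theorem permUnitary_one : permUnitary (1 : Equiv.Perm ι) = (1 : unitaryGroup ι R) :=
  Subtype.ext permMatrix_one

theorem permUnitary_mul (e f : Equiv.Perm ι) :
    (permUnitary (e * f) : unitaryGroup ι R) = permUnitary f * permUnitary e :=
  Subtype.ext (permMatrix_mul e f)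

theorem permUnitary_inv (e : Equiv.Perm ι) :
    (permUnitary e)⁻¹ = (permUnitary e⁻¹ : unitaryGroup ι R) :=
  Subtype.ext (conjTranspose_permMatrix e)

end PermUnitary

theorem joined_one_permUnitary (e : Equiv.Perm ι) :
    Joined (1 : unitaryGroup ι ℂ) (permUnitary e) := by
  induction e using Equiv.Perm.swap_induction_on with
  | one => rw [permUnitary_one]
  | swap_mul e x y _ he =>
    have hswap :
        IsSelfAdjoint ((permUnitary (Equiv.swap x y) : unitaryGroup ι ℂ) : Matrix ι ι ℂ) := by
      rw [IsSelfAdjoint, star_eq_conjTranspose, coe_permUnitary, conjTranspose_permMatrix,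
        Equiv.swap_inv]
    rw [permUnitary_mul, ← one_mul 1]
    exact he.mul (Unitary.joined_one_of_isSelfAdjoint hswap)

theorem kronecker_comm {l m n p : Type*} [CommMagma R] (A : Matrix l m R) (B : Matrix n p R) :
    B ⊗ₖ A = reindex (.prodComm l n) (.prodComm m p) (A ⊗ₖ B) := by
  ext ⟨i, j⟩ ⟨k, l⟩
  exact mul_comm _ _

end Matrix

namespace Paper

theorem uReindex_eq_permUnitary_conj {ι : Type} [Fintype ι] [DecidableEq ι] (e : Equiv.Perm ι)
    (A : unitaryGroup ι ℂ) : uReindex e A = permUnitary e⁻¹ * A * (permUnitary e⁻¹)⁻¹ := by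
  rw [permUnitary_inv, inv_inv]
  exact Subtype.ext (permMatrix_mul_mul_inv_permMatrix e⁻¹ A.1).symm

def kronCommPerm (m n : ℕ) : Equiv.Perm (Fin (m * n)) :=
  finProdFinEquiv.symm.trans
    ((Equiv.prodComm _ _).trans (finProdFinEquiv.trans (finCongr (Nat.mul_comm n m))))

theorem kronL_eq_uReindex (m n : ℕ) (A : U m) :
    kronL m n A = uReindex (kronCommPerm m n) (kronR m n A) := by
  apply Subtype.ext
  simp only [kronL, kronR, ContinuousMap.coe_mk, uCast, uReindex_val, kronU, kronecker_comm A.1,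
    reindex_apply, submatrix_submatrix]
  congr 1 <;> ext <;> simp [kronCommPerm]

theorem kronR_homotopic_kronL_general (m n : ℕ) :
    (kronR m n).Homotopic (kronL m n) :=
  ContinuousMap.homotopic_of_forall_eq_conj (joined_one_permUnitary _) fun A => by
    rw [kronL_eq_uReindex, uReindex_eq_permUnitary_conj]

/-- The maps `A ↦ A ⊗ I_n` and `A ↦ I_n ⊗ A`, `U_m → U_{mn}`, are homotopic. -/
theorem kronR_homotopic_kronL (m n : ℕ) (hm : 0 < m) (hn : 0 < n) :
    (kronR m n).Homotopic (kronL m n) :=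
  kronR_homotopic_kronL_general m n

end Paper
end
end

section
/- Let m and n be positive integers and let ⊗ : U_m × U_n → U_{mn} be the continuous homomorphism given by the Kronecker product (A,B) ↦ A ⊗ B. Then for every i ≥ 1, every x ∈ π_i(U_m) and every y ∈ π_i(U_n), one has π_i(⊗)(x,y) = π_i(⊕^n)(x) · π_i(⊕^m)(y) in the group π_i(U_{mn}), where ⊕^n : U_m → U_{mn} is the n-fold block-diagonal sum A ↦ diag(A,…,A) and ⊕^m : U_n → U_{mn} is the m-fold block-diagonal sum B ↦ diag(B,…,B). -/
open Matrix Kronecker unitInterval Topology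

noncomputable section

namespace Paper

/-- The `n`-fold direct sum `⊕^n : U_m → U_{mn}`, `A ↦ diag(A, …, A)`. -/
def nSumC (m n : ℕ) : C(U m, U (m * n)) :=
  ⟨fun A => uCast (Nat.mul_comm n m) (blockDiagU fun _ : Fin n => A),
    (continuous_uCast _).comp (continuous_blockDiagU fun _ => continuous_id)⟩

theorem nSumC_one (m n : ℕ) : nSumC m n 1 = 1 := by
  show uCast _ (blockDiagU _) = 1
  rw [blockDiagU_one, uCast_one]

/-- The `m`-fold direct sum `⊕^m : U_n → U_{mn}`, `B ↦ diag(B, …, B)`. -/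
def mSumC (m n : ℕ) : C(U n, U (m * n)) :=
  ⟨fun B => blockDiagU fun _ : Fin m => B, continuous_blockDiagU fun _ => continuous_id⟩

theorem mSumC_one (m n : ℕ) : mSumC m n 1 = 1 := blockDiagU_one

end Paper

/-!
Since `A ⊗ B = (A ⊗ 1)(1 ⊗ B)`, and in a topological group the product of `π_i` (`i ≥ 1`) is
induced by pointwise multiplication of maps (Eckmann–Hilton), `π_i(⊗)(x, y)` is the product of
the images of `x` under `A ↦ A ⊗ 1` and of `y` under `B ↦ 1 ⊗ B`. The latter map is `⊕^m`
itself; the former is `⊕^n` conjugated by a permutation matrix. Every transposition matrix is a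
unitary involution `g`, joined to `1` by the path `t ↦ 1 + (e^{iπt} - 1) (1 - g) / 2`, so
permutation matrices lie in the identity component and conjugating by them does not change the
induced map on homotopy groups.
-/

namespace GenLoop

variable {N G : Type*} [TopologicalSpace G] [Monoid G] [ContinuousMul G]

def pointwiseMul (p q : GenLoop N G 1) : GenLoop N G 1 :=
  ⟨p.1 * q.1, fun t ht => by simp [p.2 t ht, q.2 t ht]⟩

@[simp] theorem pointwiseMul_apply (p q : GenLoop N G 1) (t : I^N) :
    pointwiseMul p q t = p t * q t := rfl

theorem Homotopic.pointwiseMul {p p' q q' : GenLoop N G 1} (hp : Homotopic p p')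
    (hq : Homotopic q q') : Homotopic (pointwiseMul p q) (pointwiseMul p' q') :=
  (hp.map2 ContinuousMap.HomotopyRel.prod hq).map
    (·.compContinuousMap ⟨fun x : G × G => x.1 * x.2, continuous_mul⟩)

end GenLoop

theorem HomotopyGroup.mk_pointwiseMul {N G : Type*} [DecidableEq N] [Nonempty N]
    [TopologicalSpace G] [Monoid G] [ContinuousMul G] (p q : GenLoop N G 1) :
    (⟦GenLoop.pointwiseMul p q⟧ : HomotopyGroup N G 1) =
      ((· * ·) : _ → _ → HomotopyGroup N G 1) ⟦p⟧ ⟦q⟧ := by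
  let i := Classical.arbitrary N
  -- Eckmann–Hilton interchange: padding `p` and `q` by the constant loop on opposite sides and
  -- multiplying pointwise gives their concatenation.
  have hsplit : GenLoop.transAt i q p =
      GenLoop.pointwiseMul (GenLoop.transAt i GenLoop.const p)
        (GenLoop.transAt i q GenLoop.const) := by
    ext t
    simp only [GenLoop.pointwiseMul_apply, GenLoop.transAt, GenLoop.coe_copy]
    split_ifs <;> simp [GenLoop.const_apply]
  have hp : (⟦GenLoop.transAt i GenLoop.const p⟧ : HomotopyGroup N G 1) = ⟦p⟧ := by
    rw [← HomotopyGroup.mul_spec, ← HomotopyGroup.one_def]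
    exact @mul_one (HomotopyGroup N G 1) _ ⟦p⟧
  have hq : (⟦GenLoop.transAt i q GenLoop.const⟧ : HomotopyGroup N G 1) = ⟦q⟧ := by
    rw [← HomotopyGroup.mul_spec, ← HomotopyGroup.one_def]
    exact @one_mul (HomotopyGroup N G 1) _ ⟦q⟧
  rw [HomotopyGroup.mul_spec (i := i), hsplit]
  exact Quotient.sound ((Quotient.exact hp.symm).pointwiseMul (Quotient.exact hq.symm))

section UnitaryInvolution

variable {A : Type*} [Ring A] [StarRing A] [Algebra ℂ A] [StarModule ℂ A]

theorem IsStarProjection.one_add_smul_mem_unitary {Q : A} (hQ : IsStarProjection Q) {z : ℂ}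
    (hz : ‖z‖ = 1) : 1 + (z - 1) • Q ∈ unitary A := by
  replace hz : star z * z = 1 := by rw [Complex.star_def, Complex.conj_mul', hz]; norm_num
  have hmul : ∀ a b : ℂ, (1 + a • Q) * (1 + b • Q) = 1 + (a + b + a * b) • Q := by
    intro a b
    rw [mul_add, add_mul, add_mul, one_mul, mul_one, one_mul, smul_mul_smul_comm,
      hQ.isIdempotentElem.eq]
    module
  have hstar : star (1 + (z - 1) • Q) = 1 + (star z - 1) • Q := by
    rw [star_add, star_one, star_smul, hQ.isSelfAdjoint.star_eq, star_sub, star_one]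
  rw [Unitary.mem_iff, hstar, hmul, hmul]
  constructor
  · rw [show star z - 1 + (z - 1) + (star z - 1) * (z - 1) = 0 by linear_combination hz,
      zero_smul, add_zero]
  · rw [show z - 1 + (star z - 1) + (z - 1) * (star z - 1) = 0 by linear_combination hz,
      zero_smul, add_zero]

theorem isStarProjection_two_inv_smul_one_sub {g : A} (hsa : star g = g) (hsq : g * g = 1) :
    IsStarProjection ((2⁻¹ : ℂ) • (1 - g)) := by
  refine ⟨?_, ?_⟩
  · rw [IsIdempotentElem, smul_mul_smul_comm]
    simp only [sub_mul, mul_sub, one_mul, mul_one, hsq]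
    module
  · rw [IsSelfAdjoint, star_smul, star_sub, star_one, hsa, star_inv₀, star_ofNat]

variable [TopologicalSpace A] [ContinuousAdd A] [ContinuousSMul ℂ A]

theorem Unitary.joined_one_of_mul_self_eq_one {g : unitary A} (hg : g * g = 1) :
    Joined 1 g := by
  have hQ := isStarProjection_two_inv_smul_one_sub
    (by rw [← Unitary.coe_star, Unitary.star_eq_inv, inv_eq_of_mul_eq_one_left hg])
    (congrArg Subtype.val hg)
  let e : I → ℂ := fun t => Complex.exp ((Real.pi * t : ℝ) * Complex.I)
  refine ⟨{ toFun := fun t => ⟨1 + (e t - 1) • _, hQ.one_add_smul_mem_unitary ?_⟩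
            continuous_toFun := by fun_prop
            source' := ?_
            target' := ?_ }⟩
  · exact Complex.norm_exp_ofReal_mul_I _
  · apply Subtype.ext
    simp [e]
  · apply Subtype.ext
    simp only [e, Set.Icc.coe_one, mul_one, Complex.exp_pi_mul_I]
    module

end UnitaryInvolution

section PermutationMatrix

variable {n : Type*} [Fintype n] [DecidableEq n]

def Matrix.permUnitaryHom : Equiv.Perm n →* Matrix.unitaryGroup n ℂ :=
  (Matrix.permMatrixHom (R := ℂ)).codRestrict _ fun τ => by
    rw [Matrix.mem_unitaryGroup_iff, Matrix.permMatrixHom_apply, Matrix.star_eq_conjTranspose,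
      Matrix.conjTranspose_permMatrix, ← Matrix.permMatrix_mul, inv_inv, mul_inv_cancel,
      Matrix.permMatrix_one]

theorem Matrix.joined_one_permUnitaryHom (τ : Equiv.Perm n) : Joined 1 (permUnitaryHom τ) := by
  induction τ using Equiv.Perm.swap_induction_on with
  | one => rw [map_one]
  | swap_mul τ a b _ ih =>
    have hswap : Joined 1 (permUnitaryHom (Equiv.swap a b)) :=
      Unitary.joined_one_of_mul_self_eq_one (by rw [← map_mul, Equiv.swap_mul_self, map_one])
    simpa using hswap.mul ih

end PermutationMatrix

namespace Paper

section InducedMap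

variable {k : ℕ} {X Y : Type} [TopologicalSpace X] [TopologicalSpace Y] {x : X} {y : Y}

theorem πMap_comp {Z : Type} [TopologicalSpace Z] {z : Z} (f : C(X, Y)) (g : C(Y, Z))
    (hf : f x = y) (hg : g y = z) (w : HomotopyGroup (Fin k) X x) :
    πMap k (g.comp f) ((congrArg g hf).trans hg) w = πMap k g hg (πMap k f hf w) :=
  Quotient.inductionOn w fun _ => rfl

theorem πMap_eq_of_homotopyRel {f g : C(X, Y)} (hf : f x = y) (hg : g x = y)
    (H : f.HomotopyRel g {x}) (w : HomotopyGroup (Fin k) X x) :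
    πMap k f hf w = πMap k g hg w :=
  Quotient.inductionOn w fun p => Quotient.sound
    ⟨⟨H.toHomotopy.compContinuousMap p.1, fun t s hs => by
      change H (t, p s) = f (p s)
      rw [GenLoop.boundary p s hs]
      exact H.eq_fst t rfl⟩⟩

theorem πMap_eq_mul_of_apply_eq_mul {G : Type} [TopologicalSpace G] [Monoid G] [ContinuousMul G]
    {f g h : C(X, G)} (hf : f x = 1) (hg : g x = 1) (hh : h x = 1)
    (hfgh : ∀ a, h a = f a * g a) (w : HomotopyGroup (Fin (k + 1)) X x) :
    πMap (k + 1) h hh w = πMap (k + 1) f hf w * πMap (k + 1) g hg w := by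
  induction w using Quotient.inductionOn with
  | _ p =>
    have hloop : loopMap h hh p = GenLoop.pointwiseMul (loopMap f hf p) (loopMap g hg p) :=
      GenLoop.ext _ _ fun t => hfgh (p t)
    exact (congrArg _ hloop).trans (HomotopyGroup.mk_pointwiseMul _ _)

theorem πMap_eq_of_conj {G : Type} [TopologicalSpace G] [Group G] [IsTopologicalGroup G]
    {f g : C(X, G)} (hf : f x = 1) (hg : g x = 1) {u : G} (hu : Joined 1 u)
    (hfg : ∀ a, g a = u * f a * u⁻¹) (w : HomotopyGroup (Fin k) X x) :
    πMap k g hg w = πMap k f hf w := by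
  obtain ⟨γ⟩ := hu
  let H : f.HomotopyRel g {x} :=
    { toFun := fun ta => γ ta.1 * f ta.2 * (γ ta.1)⁻¹
      continuous_toFun := by fun_prop
      map_zero_left := by simp
      map_one_left := by simp [hfg]
      prop' := by simp [hf] }
  exact (πMap_eq_of_homotopyRel hf hg H w).symm

end InducedMap

theorem uReindex_eq_conj {n : Type} [Fintype n] [DecidableEq n] (τ : Equiv.Perm n)
    (M : Matrix.unitaryGroup n ℂ) :
    uReindex τ M = Matrix.permUnitaryHom τ * M * (Matrix.permUnitaryHom τ)⁻¹ := by
  apply Subtype.ext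
  change M.1.submatrix τ.symm τ.symm = τ⁻¹.permMatrix ℂ * M.1 * star (τ⁻¹.permMatrix ℂ)
  rw [Matrix.star_eq_conjTranspose, Matrix.conjTranspose_permMatrix, inv_inv,
    PEquiv.toMatrix_toPEquiv_mul, PEquiv.mul_toMatrix_toPEquiv]
  rfl

section Kronecker

variable {m n : ℕ}

theorem kronU_one_mul_one_kronU (A : U m) (B : U n) : kronU A 1 * kronU 1 B = kronU A B := by
  apply Subtype.ext
  change (A.1 ⊗ₖ 1).submatrix _ _ * ((1 : Matrix (Fin m) (Fin m) ℂ) ⊗ₖ B.1).submatrix _ _ =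
    (A.1 ⊗ₖ B.1).submatrix _ _
  rw [Matrix.submatrix_mul_equiv, ← Matrix.mul_kronecker_mul, mul_one, one_mul]

theorem mSumC_apply (B : U n) : mSumC m n B = kronU 1 B := by
  apply Subtype.ext
  ext i j
  simp [mSumC, blockDiagU, kronU, bde, Matrix.blockDiagonal_apply, Matrix.one_apply]

/-- Sends the index `i * n + j` of `A ⊗ 1` to the index `j * m + i` of `diag(A, …, A)`. -/
def shuffle (m n : ℕ) : Equiv.Perm (Fin (m * n)) :=
  finProdFinEquiv.symm.trans ((bde n m).trans (finCongr (Nat.mul_comm n m)))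

theorem nSumC_apply (A : U m) : nSumC m n A = uReindex (shuffle m n) (kronU A 1) := by
  apply Subtype.ext
  ext i j
  simp [nSumC, uCast, blockDiagU, kronU, shuffle, bde, Matrix.blockDiagonal_apply,
    Matrix.one_apply]

theorem kronR_one : kronR m n 1 = 1 := kronU_one

theorem πMap_nSumC_eq_πMap_kronR (k : ℕ) (z : HomotopyGroup (Fin k) (U m) 1) :
    πMap k (nSumC m n) (nSumC_one m n) z = πMap k (kronR m n) kronR_one z :=
  πMap_eq_of_conj _ _ (Matrix.joined_one_permUnitaryHom (shuffle m n))
    (fun A => by rw [nSumC_apply, uReindex_eq_conj]; rfl) z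

end Kronecker

theorem tens_induced_eq_mul_general (m n : ℕ) (i : ℕ)
    (z : HomotopyGroup (Fin (i + 1)) (U m × U n) 1) :
    πMap (i + 1) (tens m n) (tens_one m n) z =
      πMap (i + 1) (nSumC m n) (nSumC_one m n)
        (πMap (i + 1) (ContinuousMap.fst : C(U m × U n, U m)) rfl z) *
      πMap (i + 1) (mSumC m n) (mSumC_one m n)
        (πMap (i + 1) (ContinuousMap.snd : C(U m × U n, U n)) rfl z) := by
  have hsplit (p : U m × U n) : tens m n p = kronR m n p.1 * mSumC m n p.2 := by
    rw [mSumC_apply]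
    exact (kronU_one_mul_one_kronU p.1 p.2).symm
  rw [πMap_nSumC_eq_πMap_kronR, ← πMap_comp (y := 1) _ _ rfl kronR_one,
    ← πMap_comp (y := 1) _ _ rfl (mSumC_one m n)]
  exact πMap_eq_mul_of_apply_eq_mul _ _ _ hsplit z

/-- For every `i ≥ 1` (written `i + 1`), the Kronecker product
`⊗ : U_m × U_n → U_{mn}` satisfies `π_i(⊗)(x, y) = π_i(⊕^n)(x) · π_i(⊕^m)(y)`, where `(x, y)`
corresponds to `z ∈ π_i(U_m × U_n)` via the projections. -/
theorem tens_induced_eq_mul (m n : ℕ) (hm : 0 < m) (hn : 0 < n) (i : ℕ)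
    (z : HomotopyGroup (Fin (i + 1)) (U m × U n) 1) :
    πMap (i + 1) (tens m n) (tens_one m n) z =
      πMap (i + 1) (nSumC m n) (nSumC_one m n)
        (πMap (i + 1) (ContinuousMap.fst : C(U m × U n, U m)) rfl z) *
      πMap (i + 1) (mSumC m n) (mSumC_one m n)
        (πMap (i + 1) (ContinuousMap.snd : C(U m × U n, U n)) rfl z) :=
  tens_induced_eq_mul_general m n i z

end Paper
end
end
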